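/- Let B be a PSIT and X ∈ ℛ^B a càdlàg process on B. Then ΔX = 0 (as a process on B) if and only if X ∈ 𝒞^B, i.e., X admits a coupled sequence (T_n, X^{(n)}) in which every X^{(n)} is a continuous process. -/

import Mathlib

/-!
Common framework: stochastic processes on predictable sets of interval type (PSITs),
following Yue–Wang–Huang, "Stochastic Integrals on Predictable Sets of Interval Type
with Financial Applications".

Time index: `ℝ≥0`.  Stopping times take values in `ℝ≥0∞`.
A process is a map `Ω → ℝ≥0 → ℝ`.
-/

open MeasureTheory Set Filter Function
open scoped NNReal ENNReal Topology

noncomputable section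

attribute [local instance] Classical.propDecidable

variable {Ω : Type*} [m : MeasurableSpace Ω]

/-- A stopping time with values in `[0,∞]` relative to the filtration `ℱ`:
`{T ≤ t} ∈ ℱ t` for every `t`. -/
def IsStopping (ℱ : Filtration ℝ≥0 m) (T : Ω → ℝ≥0∞) : Prop :=
  ∀ t : ℝ≥0, MeasurableSet[ℱ t] {ω | T ω ≤ (t : ℝ≥0∞)}

/-- The process `X` stopped at the (possibly infinite) random time `T`:
`X^T (ω, t) = X (ω, T ω ⊓ t)`. -/
def stopped (X : Ω → ℝ≥0 → ℝ) (T : Ω → ℝ≥0∞) : Ω → ℝ≥0 → ℝ :=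
  fun ω t => X ω (min (T ω) (t : ℝ≥0∞)).toNNReal

/-- An increasing sequence of stopping times with `T n ↑ ∞`. -/
def LocSeq (ℱ : Filtration ℝ≥0 m) (T : ℕ → Ω → ℝ≥0∞) : Prop :=
  (∀ n, IsStopping ℱ (T n)) ∧ (∀ ω, Monotone fun n => T n ω) ∧ ∀ ω, (⨆ n, T n ω) = ∞

/-- The usual conditions: the filtration is right-continuous and `ℱ 0` contains
all `ℙ`-null sets. -/
def UsualConditions (ℙ : Measure Ω) (ℱ : Filtration ℝ≥0 m) : Prop :=
  (∀ t : ℝ≥0, (ℱ t : MeasurableSpace Ω) = ⨅ (s : ℝ≥0) (_ : t < s), (ℱ s : MeasurableSpace Ω)) ∧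
    ∀ s : Set Ω, ℙ s = 0 → MeasurableSet[ℱ 0] s

/-- The predictable σ-field on `Ω × ℝ≥0`, generated by the sets `F × {0}` with
`F ∈ ℱ 0` and `F × (s, t]` with `F ∈ ℱ s`. -/
def predictableSigma (ℱ : Filtration ℝ≥0 m) : MeasurableSpace (Ω × ℝ≥0) :=
  MeasurableSpace.generateFrom
    ({A | ∃ F : Set Ω, MeasurableSet[ℱ 0] F ∧ A = F ×ˢ ({0} : Set ℝ≥0)} ∪
      {A | ∃ (s t : ℝ≥0) (F : Set Ω), s < t ∧ MeasurableSet[ℱ s] F ∧ A = F ×ˢ Ioc s t})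

/-- The class `𝒫` of predictable processes. -/
def classP (ℱ : Filtration ℝ≥0 m) : Set (Ω → ℝ≥0 → ℝ) :=
  {X | Measurable[predictableSigma ℱ] fun p : Ω × ℝ≥0 => X p.1 p.2}

/-- A set of interval type: every section is nonempty and of the form
`[0, T ω)` or `[0, T ω]`. -/
def IsIntervalType (B : Set (Ω × ℝ≥0)) : Prop :=
  ∀ ω : Ω, {t : ℝ≥0 | (ω, t) ∈ B}.Nonempty ∧
    ∃ T : ℝ≥0∞, {t : ℝ≥0 | (ω, t) ∈ B} = {t : ℝ≥0 | (t : ℝ≥0∞) < T} ∨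
      {t : ℝ≥0 | (ω, t) ∈ B} = {t : ℝ≥0 | (t : ℝ≥0∞) ≤ T}

/-- A predictable set of interval type (PSIT). -/
def IsPSIT (ℱ : Filtration ℝ≥0 m) (B : Set (Ω × ℝ≥0)) : Prop :=
  IsIntervalType B ∧ MeasurableSet[predictableSigma ℱ] B

/-- The debut of the complement of `B`. -/
def debut (B : Set (Ω × ℝ≥0)) (ω : Ω) : ℝ≥0∞ :=
  ⨅ (t : ℝ≥0) (_ : (ω, t) ∉ B), (t : ℝ≥0∞)

/-- The stochastic interval `[0, T]`. -/
def Icc0 (T : Ω → ℝ≥0∞) : Set (Ω × ℝ≥0) :=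
  {p : Ω × ℝ≥0 | (p.2 : ℝ≥0∞) ≤ T p.1}

/-- The extension `X·1_B` of a function on `B` by `0` off `B`. -/
def extend0 (B : Set (Ω × ℝ≥0)) (X : Ω → ℝ≥0 → ℝ) : Ω → ℝ≥0 → ℝ :=
  fun ω t => if (ω, t) ∈ B then X ω t else 0

/-- A process: a family of random variables indexed by `ℝ≥0`. -/
def IsProcess (X : Ω → ℝ≥0 → ℝ) : Prop :=
  ∀ t : ℝ≥0, Measurable fun ω => X ω t

/-- A process on `B` : the extension by `0` off `B` is a process. -/
def IsProcessOn (B : Set (Ω × ℝ≥0)) (X : Ω → ℝ≥0 → ℝ) : Prop :=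
  IsProcess (extend0 B X)

/-- Coupled sequence `(T n, Y n)` for the process `X` on `B`: the `T n` are increasing
stopping times with `T n ↑ debut B`, `⋃ n [0, T n] ⊇ B`, and `X = Y n` on `B ∩ [0, T n]`. -/
structure IsCS (ℱ : Filtration ℝ≥0 m) (B : Set (Ω × ℝ≥0)) (X : Ω → ℝ≥0 → ℝ)
    (T : ℕ → Ω → ℝ≥0∞) (Y : ℕ → Ω → ℝ≥0 → ℝ) : Prop where
  stopping : ∀ n, IsStopping ℱ (T n)
  mono : ∀ ω, Monotone fun n => T n ω
  sup_eq : ∀ ω, (⨆ n, T n ω) = debut B ω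
  covers : B ⊆ ⋃ n, Icc0 (T n)
  agrees : ∀ (n : ℕ) (ω : Ω) (t : ℝ≥0), (ω, t) ∈ B → (t : ℝ≥0∞) ≤ T n ω → X ω t = Y n ω t

/-- `X ∈ 𝒟^B` : `X` admits a coupled sequence all of whose members lie in `𝒟`
(a fundamental coupled sequence, FCS). -/
def MemOn (ℱ : Filtration ℝ≥0 m) (𝒟 : Set (Ω → ℝ≥0 → ℝ)) (B : Set (Ω × ℝ≥0))
    (X : Ω → ℝ≥0 → ℝ) : Prop :=
  ∃ T Y, IsCS ℱ B X T Y ∧ ∀ n, Y n ∈ 𝒟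

/-- A stopping time on `B` : a stopping time with `[0, S] ⊆ B`. -/
def IsStoppingOn (ℱ : Filtration ℝ≥0 m) (B : Set (Ω × ℝ≥0)) (S : Ω → ℝ≥0∞) : Prop :=
  IsStopping ℱ S ∧ Icc0 S ⊆ B

/-- A fundamental sequence (FS) for `B` : an increasing sequence of stopping times with
`B = ⋃ n [0, τ n]`. -/
def IsFS (ℱ : Filtration ℝ≥0 m) (B : Set (Ω × ℝ≥0)) (τ : ℕ → Ω → ℝ≥0∞) : Prop :=
  (∀ n, IsStopping ℱ (τ n)) ∧ (∀ ω, Monotone fun n => τ n ω) ∧ B = ⋃ n, Icc0 (τ n)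

/-- Stability of a class of processes under stopping. -/
def StableUnderStopping (ℱ : Filtration ℝ≥0 m) (𝒟 : Set (Ω → ℝ≥0 → ℝ)) : Prop :=
  ∀ X ∈ 𝒟, ∀ T : Ω → ℝ≥0∞, IsStopping ℱ T → stopped X T ∈ 𝒟

/-- The localized class `𝒟_loc`. -/
def localized (ℱ : Filtration ℝ≥0 m) (𝒟 : Set (Ω → ℝ≥0 → ℝ)) : Set (Ω → ℝ≥0 → ℝ) :=
  {X | Measurable[ℱ 0] (fun ω => X ω 0) ∧
    ∃ T : ℕ → Ω → ℝ≥0∞, LocSeq ℱ T ∧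
      ∀ n, (fun ω t => stopped X (T n) ω t - X ω 0) ∈ 𝒟}

/-- Stability of a class of processes under localization: `𝒟 = 𝒟_loc`. -/
def StableUnderLocalization (ℱ : Filtration ℝ≥0 m) (𝒟 : Set (Ω → ℝ≥0 → ℝ)) : Prop :=
  localized ℱ 𝒟 = 𝒟

/-- A càdlàg function on `ℝ≥0` : right-continuous with finite left limits. -/
def IsCadlagFn (f : ℝ≥0 → ℝ) : Prop :=
  (∀ t, ContinuousWithinAt f (Ici t) t) ∧
    ∀ t : ℝ≥0, 0 < t → ∃ l : ℝ, Tendsto f (𝓝[<] t) (𝓝 l)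

/-- The class `𝔐` of jointly measurable processes. -/
def classM : Set (Ω → ℝ≥0 → ℝ) :=
  {X | Measurable fun p : Ω × ℝ≥0 => X p.1 p.2}

/-- The class `𝔐₀` of jointly measurable processes with null initial value. -/
def classM0 : Set (Ω → ℝ≥0 → ℝ) :=
  {X | X ∈ classM ∧ ∀ ω, X ω 0 = 0}

/-- The class `ℛ` of càdlàg processes. -/
def classR : Set (Ω → ℝ≥0 → ℝ) := {X : Ω → ℝ≥0 → ℝ | ∀ ω, IsCadlagFn (X ω)}

/-- The class `𝒞` of continuous processes. -/
def classC : Set (Ω → ℝ≥0 → ℝ) := {X : Ω → ℝ≥0 → ℝ | ∀ ω, Continuous (X ω)}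

/-- Finite variation on every compact interval. -/
def FiniteVarFn (f : ℝ≥0 → ℝ) : Prop := ∀ t : ℝ≥0, BoundedVariationOn f (Iic t)

/-- The class `𝔙` of càdlàg processes with paths of finite variation on compacts. -/
def classVraw : Set (Ω → ℝ≥0 → ℝ) :=
  {X : Ω → ℝ≥0 → ℝ | ∀ ω, IsCadlagFn (X ω) ∧ FiniteVarFn (X ω)}

/-- Adaptedness to the filtration `ℱ`. -/
def IsAdapted (ℱ : Filtration ℝ≥0 m) (X : Ω → ℝ≥0 → ℝ) : Prop :=
  ∀ t : ℝ≥0, Measurable[ℱ t] fun ω => X ω t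

/-- The class `𝒱` of adapted càdlàg finite-variation processes. -/
def classV (ℱ : Filtration ℝ≥0 m) : Set (Ω → ℝ≥0 → ℝ) :=
  {X | X ∈ classVraw ∧ IsAdapted ℱ X}

/-- The class `𝒱₀`. -/
def classV0 (ℱ : Filtration ℝ≥0 m) : Set (Ω → ℝ≥0 → ℝ) :=
  {X | X ∈ classV ℱ ∧ ∀ ω, X ω 0 = 0}

/-- Uniformly integrable martingale. -/
def IsUIMartingale (ℙ : Measure Ω) (ℱ : Filtration ℝ≥0 m) (X : Ω → ℝ≥0 → ℝ) : Prop :=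
  Martingale (fun t ω => X ω t) ℱ ℙ ∧ UniformIntegrable (fun t ω => X ω t) 1 ℙ

/-- The class `ℳ_loc` of local martingales: càdlàg adapted processes `X` admitting
stopping times `T n ↑ ∞` with each `X^{T n} − X₀` a uniformly integrable martingale. -/
def classMloc (ℙ : Measure Ω) (ℱ : Filtration ℝ≥0 m) : Set (Ω → ℝ≥0 → ℝ) :=
  {X | (∀ ω, IsCadlagFn (X ω)) ∧ IsAdapted ℱ X ∧
    ∃ T : ℕ → Ω → ℝ≥0∞, LocSeq ℱ T ∧
      ∀ n, IsUIMartingale ℙ ℱ fun ω t => stopped X (T n) ω t - X ω 0}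

/-- The class `ℳ_{loc,0}`. -/
def classMloc0 (ℙ : Measure Ω) (ℱ : Filtration ℝ≥0 m) : Set (Ω → ℝ≥0 → ℝ) :=
  {X | X ∈ classMloc ℙ ℱ ∧ ∀ ω, X ω 0 = 0}

/-- The class `𝒮` of semimartingales. -/
def classS (ℙ : Measure Ω) (ℱ : Filtration ℝ≥0 m) : Set (Ω → ℝ≥0 → ℝ) :=
  {X | ∃ M ∈ classMloc ℙ ℱ, ∃ A ∈ classV0 ℱ, X = fun ω t => M ω t + A ω t}

/-- The left limit of `f` at `t`, with the convention `f(0−) = f 0`. -/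
def leftLimFn (f : ℝ≥0 → ℝ) (t : ℝ≥0) : ℝ :=
  if t = 0 then f 0 else limUnder (𝓝[<] t) f

/-- The left-limit process. -/
def leftLimProc (X : Ω → ℝ≥0 → ℝ) : Ω → ℝ≥0 → ℝ := fun ω t => leftLimFn (X ω) t

/-- The jump process `ΔX = X − X₋`. -/
def jumpProc (X : Ω → ℝ≥0 → ℝ) : Ω → ℝ≥0 → ℝ := fun ω t => X ω t - leftLimFn (X ω) t

/-- The pre-stopped process `X^{T−} = X·1_{[0,T)} + X_{T−}·1_{[T,∞)}`. -/
def stoppedPre (X : Ω → ℝ≥0 → ℝ) (T : Ω → ℝ≥0∞) : Ω → ℝ≥0 → ℝ :=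
  fun ω t => if (t : ℝ≥0∞) < T ω then X ω t else leftLimFn (X ω) (T ω).toNNReal

/-- Indistinguishability on `B`. -/
def IndistOn (ℙ : Measure Ω) (B : Set (Ω × ℝ≥0)) (X Y : Ω → ℝ≥0 → ℝ) : Prop :=
  ∀ᵐ ω ∂ℙ, ∀ t : ℝ≥0, (ω, t) ∈ B → X ω t = Y ω t

/-- A locally bounded process: stopped at suitable `T n ↑ ∞` it is bounded. -/
def LocallyBounded (ℱ : Filtration ℝ≥0 m) (X : Ω → ℝ≥0 → ℝ) : Prop :=
  ∃ T : ℕ → Ω → ℝ≥0∞, LocSeq ℱ T ∧ ∀ n, ∃ C : ℝ, ∀ ω t, |stopped X (T n) ω t| ≤ C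

/-- The positive-variation function of a path (with an atom `a 0` at time `0`). -/
def posVarFn (a : ℝ≥0 → ℝ) (t : ℝ≥0) : ℝ :=
  max (a 0) 0 + ((eVariationOn a (Iic t)).toReal + a t - a 0) / 2

/-- The negative-variation function of a path (with an atom `a 0` at time `0`). -/
def negVarFn (a : ℝ≥0 → ℝ) (t : ℝ≥0) : ℝ :=
  max (-a 0) 0 + ((eVariationOn a (Iic t)).toReal - a t + a 0) / 2

/-- `(μp, μm)` are the Jordan components of the Lebesgue–Stieltjes measure `da` of the
path `a` (including an atom of mass `a 0` at `0`), characterized on the time set `s`. -/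
def IsLSPairOn (a : ℝ≥0 → ℝ) (μp μm : Measure ℝ≥0) (s : Set ℝ≥0) : Prop :=
  ∀ t ∈ s, μp (Iic t) = ENNReal.ofReal (posVarFn a t) ∧
    μm (Iic t) = ENNReal.ofReal (negVarFn a t)

/-- Pathwise Lebesgue–Stieltjes integrability: `∫_{[0,t]} |h| |da| < ∞` for all `t ∈ s`. -/
def LSIntegrablePathOn (h a : ℝ≥0 → ℝ) (s : Set ℝ≥0) : Prop :=
  ∃ μp μm : Measure ℝ≥0, IsLSPairOn a μp μm s ∧
    ∀ t ∈ s, (∫⁻ u in Iic t, ENNReal.ofReal |h u| ∂(μp + μm)) < ∞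

/-- `L` is the pathwise Lebesgue–Stieltjes integral `t ↦ ∫_{[0,t]} h da`, for `t ∈ s`. -/
def IsLSIntegralPathOn (h a : ℝ≥0 → ℝ) (s : Set ℝ≥0) (L : ℝ≥0 → ℝ) : Prop :=
  ∃ μp μm : Measure ℝ≥0, IsLSPairOn a μp μm s ∧
    ∀ t ∈ s, (∫⁻ u in Iic t, ENNReal.ofReal |h u| ∂(μp + μm)) < ∞ ∧
      L t = (∫ u in Iic t, h u ∂μp) - ∫ u in Iic t, h u ∂μm

/-- `H` is integrable on `B` with respect to `A` :
`∫_{[0,t]} |H_s(ω)| |dA_s(ω)| < ∞` for all `(ω, t) ∈ B`.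
(With `B = univ` this is classic Lebesgue–Stieltjes integrability.) -/
def LSIntegrableOn (B : Set (Ω × ℝ≥0)) (H A : Ω → ℝ≥0 → ℝ) : Prop :=
  ∀ ω, LSIntegrablePathOn (H ω) (A ω) {t : ℝ≥0 | (ω, t) ∈ B}

/-- `G = H • A`, the Lebesgue–Stieltjes integral on `B` of `H` with respect to `A` :
`G (ω, t) = ∫_{[0,t]} H_s(ω) dA_s(ω)` for `(ω, t) ∈ B`.
(With `B = univ` this is the classic Lebesgue–Stieltjes integral `H.A`.) -/
def IsLSIntegralOn (B : Set (Ω × ℝ≥0)) (H A G : Ω → ℝ≥0 → ℝ) : Prop :=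
  ∀ ω, IsLSIntegralPathOn (H ω) (A ω) {t : ℝ≥0 | (ω, t) ∈ B} (G ω)

/-- The patched process `x₀·1_{Ω×{0}} + Σ_{n} (Y n)·1_{(T (n-1), T n]}` (with `T (-1) = 0`). -/
def patch (T : ℕ → Ω → ℝ≥0∞) (Y : ℕ → Ω → ℝ≥0 → ℝ) (x0 : Ω → ℝ) : Ω → ℝ≥0 → ℝ :=
  fun ω t =>
    if t = 0 then x0 ω
    else ∑' n : ℕ,
      if (if n = 0 then (0 : ℝ≥0∞) else T (n - 1) ω) < (t : ℝ≥0∞) ∧ (t : ℝ≥0∞) ≤ T n ω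
        then Y n ω t else 0

/-- `V` is a quadratic covariation on `B` of the local martingales `M, N` on `B` :
`V ∈ 𝒱^B`, `MN − V ∈ (ℳ_{loc,0})^B` and `ΔV = ΔM·ΔN` on `B`. -/
def IsQuadCovarOn (ℙ : Measure Ω) (ℱ : Filtration ℝ≥0 m) (B : Set (Ω × ℝ≥0))
    (M N V : Ω → ℝ≥0 → ℝ) : Prop :=
  MemOn ℱ (classV ℱ) B V ∧
    MemOn ℱ (classMloc0 ℙ ℱ) B (fun ω t => M ω t * N ω t - V ω t) ∧
    IndistOn ℙ B (jumpProc V) fun ω t => jumpProc M ω t * jumpProc N ω t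

/-- `V` is a (classic) quadratic covariation of local martingales `M, N` :
`V ∈ 𝒱`, `MN − V ∈ ℳ_{loc,0}` and `ΔV = ΔM·ΔN`. -/
def IsQuadCovar (ℙ : Measure Ω) (ℱ : Filtration ℝ≥0 m) (M N V : Ω → ℝ≥0 → ℝ) : Prop :=
  V ∈ classV ℱ ∧ (fun ω t => M ω t * N ω t - V ω t) ∈ classMloc0 ℙ ℱ ∧
    ∀ᵐ ω ∂ℙ, ∀ t : ℝ≥0, jumpProc V ω t = jumpProc M ω t * jumpProc N ω t

/-- `H ∈ 𝓛_m(M)` : there is a local martingale `L` with `[L, N] = H.[M, N]`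
for every local martingale `N`. -/
def MemLm (ℙ : Measure Ω) (ℱ : Filtration ℝ≥0 m) (H M : Ω → ℝ≥0 → ℝ) : Prop :=
  ∃ L ∈ classMloc ℙ ℱ, ∀ N ∈ classMloc ℙ ℱ, ∀ V W : Ω → ℝ≥0 → ℝ,
    IsQuadCovar ℙ ℱ M N V → IsQuadCovar ℙ ℱ L N W →
      ∀ᵐ ω ∂ℙ, IsLSIntegralPathOn (H ω) (V ω) univ (W ω)

/-- `H ∈ 𝓛_m^B(M)` : there is a local martingale `L` on `B` with `[L, N] = H • [M, N]`
for every local martingale `N` on `B`. -/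
def MemLmOn (ℙ : Measure Ω) (ℱ : Filtration ℝ≥0 m) (B : Set (Ω × ℝ≥0))
    (H M : Ω → ℝ≥0 → ℝ) : Prop :=
  ∃ L, MemOn ℱ (classMloc ℙ ℱ) B L ∧
    ∀ N, MemOn ℱ (classMloc ℙ ℱ) B N → ∀ V W : Ω → ℝ≥0 → ℝ,
      IsQuadCovarOn ℙ ℱ B M N V → IsQuadCovarOn ℙ ℱ B L N W →
        ∀ᵐ ω ∂ℙ, IsLSIntegralPathOn (H ω) (V ω) {t : ℝ≥0 | (ω, t) ∈ B} (W ω)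

end

/-!
A coupled sequence of càdlàg processes `(T n, Y n)` for `X` is turned into one of continuous
processes by pre-stopping: `Y n` agrees with `X` on `B ∩ [0, T n]`, where `X` has no jumps, so
`Y n` is continuous on `[0, T n)`, and `(Y n)^{T n −}` freezes it at its left limit at `T n`,
which is then continuous everywhere and still agrees with `X` at `T n`. Conversely, a jump of `X`
at `t` is a jump of any continuous process agreeing with `X` on `[0, t]`.
-/

theorem leftLimFn_congr {f g : ℝ≥0 → ℝ} {t : ℝ≥0} (h : ∀ s ≤ t, f s = g s) :
    leftLimFn f t = leftLimFn g t := by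
  have hmap : map f (𝓝[<] t) = map g (𝓝[<] t) :=
    map_congr (eventually_nhdsWithin_of_forall fun s hs => h s (le_of_lt hs))
  simp only [leftLimFn, limUnder, hmap, h 0 zero_le]

theorem leftLimFn_eq_of_tendsto {f : ℝ≥0 → ℝ} {t : ℝ≥0} {l : ℝ} (ht : 0 < t)
    (hl : Tendsto f (𝓝[<] t) (𝓝 l)) : leftLimFn f t = l := by
  have : (𝓝[<] t).NeBot := nhdsLT_neBot_of_exists_lt ⟨0, ht⟩
  rw [leftLimFn, if_neg ht.ne']
  exact hl.limUnder_eq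

theorem leftLimFn_eq_of_continuousAt {f : ℝ≥0 → ℝ} {t : ℝ≥0} (hf : ContinuousAt f t) :
    leftLimFn f t = f t := by
  rcases eq_zero_or_pos t with rfl | ht
  · exact if_pos rfl
  · exact leftLimFn_eq_of_tendsto ht (hf.tendsto.mono_left nhdsWithin_le_nhds)

-- At `t = 0` the filter `𝓝[<] 0` is `⊥`, so the convention `f(0−) = f 0` is harmless here.
theorem IsCadlagFn.tendsto_leftLimFn {f : ℝ≥0 → ℝ} (hf : IsCadlagFn f) (t : ℝ≥0) :
    Tendsto f (𝓝[<] t) (𝓝 (leftLimFn f t)) := by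
  rcases eq_zero_or_pos t with rfl | ht
  · rw [Iio_eq_empty_iff.2 fun _ _ => zero_le, nhdsWithin_empty]
    exact tendsto_bot
  · obtain ⟨l, hl⟩ := hf.2 t ht
    rwa [leftLimFn_eq_of_tendsto ht hl]

theorem continuousAt_of_left_of_ge {f : ℝ≥0 → ℝ} {t : ℝ≥0}
    (hleft : Tendsto f (𝓝[<] t) (𝓝 (f t))) (hright : ContinuousWithinAt f (Ici t) t) :
    ContinuousAt f t := by
  have := ContinuousWithinAt.union hleft hright
  rwa [Iio_union_Ici, continuousWithinAt_univ] at this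

theorem IsCadlagFn.continuousAt {f : ℝ≥0 → ℝ} (hf : IsCadlagFn f) {t : ℝ≥0}
    (h : f t = leftLimFn f t) : ContinuousAt f t :=
  continuousAt_of_left_of_ge (h ▸ hf.tendsto_leftLimFn t) (hf.1 t)

variable {Ω : Type*}

theorem IsIntervalType.mem_of_le {B : Set (Ω × ℝ≥0)} (hB : IsIntervalType B) {ω : Ω}
    {s t : ℝ≥0} (hst : s ≤ t) (ht : (ω, t) ∈ B) : (ω, s) ∈ B := by
  obtain ⟨-, T, h | h⟩ := hB ω
  · exact (Set.ext_iff.1 h s).2 ((ENNReal.coe_le_coe.2 hst).trans_lt ((Set.ext_iff.1 h t).1 ht))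
  · exact (Set.ext_iff.1 h s).2 ((ENNReal.coe_le_coe.2 hst).trans ((Set.ext_iff.1 h t).1 ht))

theorem mem_of_lt_debut {B : Set (Ω × ℝ≥0)} {ω : Ω} {t : ℝ≥0} (h : (t : ℝ≥0∞) < debut B ω) :
    (ω, t) ∈ B := by
  by_contra hc
  exact h.not_ge (iInf₂_le t hc)

theorem jumpProc_congr {X Y : Ω → ℝ≥0 → ℝ} {ω : Ω} {t : ℝ≥0}
    (h : ∀ s ≤ t, X ω s = Y ω s) : jumpProc X ω t = jumpProc Y ω t := by
  rw [jumpProc, jumpProc, h t le_rfl, leftLimFn_congr h]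

theorem continuous_stoppedPre {X : Ω → ℝ≥0 → ℝ} {T : Ω → ℝ≥0∞} {ω : Ω}
    (hX : IsCadlagFn (X ω)) (hcont : ∀ t : ℝ≥0, (t : ℝ≥0∞) < T ω → ContinuousAt (X ω) t) :
    Continuous (stoppedPre X T ω) := by
  refine continuous_iff_continuousAt.2 fun t => ?_
  rcases lt_trichotomy (t : ℝ≥0∞) (T ω) with htT | htT | htT
  · refine (hcont t htT).congr ?_
    filter_upwards [(isOpen_Iio.preimage ENNReal.continuous_coe).mem_nhds htT] with s hs
    exact (if_pos hs).symm
  · have hval : stoppedPre X T ω t = leftLimFn (X ω) t := by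
      simp only [stoppedPre, ← htT, lt_irrefl, if_false, ENNReal.toNNReal_coe]
    refine continuousAt_of_left_of_ge ?_ ?_
    · rw [hval]
      refine (hX.tendsto_leftLimFn t).congr' ?_
      filter_upwards [self_mem_nhdsWithin] with s (hs : s < t)
      exact (if_pos (htT ▸ ENNReal.coe_lt_coe.2 hs)).symm
    · rw [ContinuousWithinAt, hval]
      refine tendsto_const_nhds.congr' ?_
      filter_upwards [self_mem_nhdsWithin] with s (hs : t ≤ s)
      simp only [stoppedPre, ← htT, not_lt.2 (ENNReal.coe_le_coe.2 hs), if_false,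
        ENNReal.toNNReal_coe]
  · refine continuousAt_const.congr (f := fun _ => leftLimFn (X ω) (T ω).toNNReal) ?_
    filter_upwards [(isOpen_Ioi.preimage ENNReal.continuous_coe).mem_nhds htT] with s hs
    exact (if_neg (not_lt.2 (le_of_lt hs))).symm

variable [m : MeasurableSpace Ω]

namespace IsCS

variable {ℱ : Filtration ℝ≥0 m} {B : Set (Ω × ℝ≥0)} {X : Ω → ℝ≥0 → ℝ}
  {T : ℕ → Ω → ℝ≥0∞} {Y : ℕ → Ω → ℝ≥0 → ℝ}

theorem mem_of_lt (hCS : IsCS ℱ B X T Y) {n : ℕ} {ω : Ω} {t : ℝ≥0}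
    (ht : (t : ℝ≥0∞) < T n ω) : (ω, t) ∈ B :=
  mem_of_lt_debut <| ht.trans_le <| hCS.sup_eq ω ▸ le_iSup (fun k => T k ω) n

theorem eq_of_le (hCS : IsCS ℱ B X T Y) (hB : IsIntervalType B) {n : ℕ} {ω : Ω} {t : ℝ≥0}
    (htB : (ω, t) ∈ B) (htT : (t : ℝ≥0∞) ≤ T n ω) {s : ℝ≥0} (hst : s ≤ t) :
    X ω s = Y n ω s :=
  hCS.agrees n ω s (hB.mem_of_le hst htB) ((ENNReal.coe_le_coe.2 hst).trans htT)

theorem exists_le (hCS : IsCS ℱ B X T Y) {ω : Ω} {t : ℝ≥0} (htB : (ω, t) ∈ B) :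
    ∃ n, (t : ℝ≥0∞) ≤ T n ω := by
  obtain ⟨n, hn⟩ := mem_iUnion.1 (hCS.covers htB)
  exact ⟨n, hn⟩

theorem jumpProc_eq (hCS : IsCS ℱ B X T Y) (hB : IsIntervalType B) {n : ℕ} {ω : Ω}
    {t : ℝ≥0} (htB : (ω, t) ∈ B) (htT : (t : ℝ≥0∞) ≤ T n ω) :
    jumpProc X ω t = jumpProc (Y n) ω t :=
  jumpProc_congr fun _ hs => hCS.eq_of_le hB htB htT hs

theorem stoppedPre (hCS : IsCS ℱ B X T Y) (hB : IsIntervalType B)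
    (hjump : ∀ ω t, (ω, t) ∈ B → jumpProc X ω t = 0) :
    IsCS ℱ B X T fun n => _root_.stoppedPre (Y n) (T n) := by
  refine ⟨hCS.stopping, hCS.mono, hCS.sup_eq, hCS.covers, fun n ω t htB htT => ?_⟩
  rcases htT.lt_or_eq with hlt | heq
  · exact (hCS.agrees n ω t htB htT).trans (if_pos hlt).symm
  · have hX : X ω t = leftLimFn (X ω) t := sub_eq_zero.1 (hjump ω t htB)
    simp only [_root_.stoppedPre, ← heq, lt_irrefl, if_false, ENNReal.toNNReal_coe]
    rw [hX]
    exact leftLimFn_congr fun s hs => hCS.eq_of_le hB htB htT hs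

end IsCS

theorem statement11_general (ℱ : Filtration ℝ≥0 m) (B : Set (Ω × ℝ≥0)) (hB : IsPSIT ℱ B)
    (X : Ω → ℝ≥0 → ℝ) (hX : MemOn ℱ (classR (Ω := Ω)) B X) :
    (∀ (ω : Ω) (t : ℝ≥0), (ω, t) ∈ B → jumpProc X ω t = 0) ↔
      MemOn ℱ (classC (Ω := Ω)) B X := by
  obtain ⟨T, Y, hCS, hY⟩ := hX
  constructor
  · intro hjump
    refine ⟨T, fun n => stoppedPre (Y n) (T n), hCS.stoppedPre hB.1 hjump,
      fun n ω => continuous_stoppedPre (hY n ω) fun t ht => (hY n ω).continuousAt ?_⟩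
    have htB := hCS.mem_of_lt ht
    exact sub_eq_zero.1 ((hCS.jumpProc_eq hB.1 htB ht.le).symm.trans (hjump ω t htB))
  · rintro ⟨S, W, hCSW, hW⟩ ω t htB
    obtain ⟨n, hn⟩ := hCSW.exists_le htB
    rw [hCSW.jumpProc_eq hB.1 htB hn, jumpProc,
      leftLimFn_eq_of_continuousAt (hW n ω).continuousAt, sub_self]

/-- For a càdlàg process `X` on a PSIT `B` : `ΔX = 0` on `B` if and
only if `X ∈ 𝒞^B`, i.e. `X` admits a coupled sequence of continuous processes. -/
theorem statement11 (ℙ : Measure Ω) [IsProbabilityMeasure ℙ] (ℱ : Filtration ℝ≥0 m)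
    (hUC : UsualConditions ℙ ℱ) (B : Set (Ω × ℝ≥0)) (hB : IsPSIT ℱ B)
    (X : Ω → ℝ≥0 → ℝ) (hX : MemOn ℱ (classR (Ω := Ω)) B X) :
    (∀ (ω : Ω) (t : ℝ≥0), (ω, t) ∈ B → jumpProc X ω t = 0) ↔
      MemOn ℱ (classC (Ω := Ω)) B X :=
  statement11_general ℱ B hB X hX
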